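/- A priori bounds for inhomogeneous equations. Let H satisfy Conditions A, B and C, let f ∈ C(Ω) ∩ L^∞(Ω), h ∈ C(∂Ω), and suppose Ω ⊂ B_{R₀}(z₀) for some z₀ ∈ ℝⁿ and R₀ > 0. Write f⁺ = max(f,0) and f⁻ = min(f,0). (i) If u ∈ usc(Ω̄) is a viscosity sub-solution of H(Du,D²u)+f(x)=0 in Ω with u ≤ h on ∂Ω, then sup_Ω u ≤ sup_{∂Ω} h + σ (sup_Ω f⁺)^{1/k} R₀^α. (ii) If u ∈ lsc(Ω̄) is a viscosity super-solution of H(Du,D²u)+f(x)=0 in Ω with u ≥ h on ∂Ω, then inf_Ω u ≥ inf_{∂Ω} h − σ |inf_Ω f⁻|^{1/k} R₀^α. -/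

import Mathlib

open Real Set Filter Matrix MeasureTheory

noncomputable section

abbrev EucSp (n : ℕ) := EuclideanSpace ℝ (Fin n)
abbrev Mat (n : ℕ) := Matrix (Fin n) (Fin n) ℝ

/-- A bounded domain: a nonempty bounded open connected set. -/
def IsBoundedDomain {n : ℕ} (Ω : Set (EucSp n)) : Prop :=
  IsOpen Ω ∧ IsConnected Ω ∧ Bornology.IsBounded Ω

/-- The Hessian matrix of `ψ` at `y`. -/
def hessianAt {n : ℕ} (ψ : EucSp n → ℝ) (y : EucSp n) : Mat n :=
  fun i j => iteratedFDeriv ℝ 2 ψ y ![EuclideanSpace.single i 1, EuclideanSpace.single j 1]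

/-- Viscosity sub-solution of `H(Du, D²u) + f(x,u) = 0` in `Ω`. -/
def ViscSubSoln {n : ℕ} (H : EucSp n → Mat n → ℝ) (f : EucSp n → ℝ → ℝ)
    (Ω : Set (EucSp n)) (u : EucSp n → ℝ) : Prop :=
  ∀ ψ : EucSp n → ℝ, ∀ y ∈ Ω, ContDiffAt ℝ 2 ψ y →
    IsLocalMax (fun x => u x - ψ x) y →
    0 ≤ H (gradient ψ y) (hessianAt ψ y) + f y (u y)

/-- Viscosity super-solution of `H(Du, D²u) + f(x,u) = 0` in `Ω`. -/
def ViscSuperSoln {n : ℕ} (H : EucSp n → Mat n → ℝ) (f : EucSp n → ℝ → ℝ)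
    (Ω : Set (EucSp n)) (u : EucSp n → ℝ) : Prop :=
  ∀ ψ : EucSp n → ℝ, ∀ y ∈ Ω, ContDiffAt ℝ 2 ψ y →
    IsLocalMin (fun x => u x - ψ x) y →
    H (gradient ψ y) (hessianAt ψ y) + f y (u y) ≤ 0

def ViscSoln {n : ℕ} (H : EucSp n → Mat n → ℝ) (f : EucSp n → ℝ → ℝ)
    (Ω : Set (EucSp n)) (u : EucSp n → ℝ) : Prop :=
  ViscSubSoln H f Ω u ∧ ViscSuperSoln H f Ω u

/-- `u ∈ C(closure Ω)` solves `H + f = 0` in `Ω` with `u = h` on `∂Ω`. -/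
def SolvesBVP {n : ℕ} (H : EucSp n → Mat n → ℝ) (f : EucSp n → ℝ → ℝ)
    (Ω : Set (EucSp n)) (u h : EucSp n → ℝ) : Prop :=
  ContinuousOn u (closure Ω) ∧ ViscSoln H f Ω u ∧ ∀ x ∈ frontier Ω, u x = h x

/-- Condition A (monotonicity). -/
def CondA {n : ℕ} (H : EucSp n → Mat n → ℝ) : Prop :=
  (∀ p, H p 0 = 0) ∧
  ∀ (p : EucSp n) (X Y : Mat n), X.IsSymm → Y.IsSymm → (Y - X).PosSemidef → H p X ≤ H p Y

/-- Condition B (homogeneity). -/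
def CondB {n : ℕ} (H : EucSp n → Mat n → ℝ) (k₁ k₂ : ℝ) : Prop :=
  0 ≤ k₁ ∧ 0 < k₂ ∧
  (∀ (θ : ℝ) (p : EucSp n) (X : Mat n), H (θ • p) X = |θ| ^ k₁ * H p X) ∧
  (∀ θ : ℝ, 0 < θ → ∀ (p : EucSp n) (X : Mat n), H p (θ • X) = θ ^ k₂ * H p X)

/-- The rank-one matrix `e ⊗ e`. -/
def outer {n : ℕ} (e : EucSp n) : Mat n := fun i j => e i * e j

def m1 {n : ℕ} (H : EucSp n → Mat n → ℝ) (s : ℝ) : ℝ :=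
  min (sInf {r | ∃ e : EucSp n, ‖e‖ = 1 ∧ r = H e (1 - s • outer e)})
      (-sSup {r | ∃ e : EucSp n, ‖e‖ = 1 ∧ r = H e (s • outer e - 1)})

def m2 {n : ℕ} (H : EucSp n → Mat n → ℝ) (s : ℝ) : ℝ :=
  max (sSup {r | ∃ e : EucSp n, ‖e‖ = 1 ∧ r = H e (1 - s • outer e)})
      (-sInf {r | ∃ e : EucSp n, ‖e‖ = 1 ∧ r = H e (s • outer e - 1)})

/-- Condition C (coercivity). -/
def CondC {n : ℕ} (H : EucSp n → Mat n → ℝ) (k₁ k₂ : ℝ) : Prop :=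
  0 < m1 H (k₁ / (k₁ + k₂)) ∧
  ∃ s₁ s₀ ℓ : ℝ, s₁ ≤ 1 ∧ 1 ≤ s₀ ∧ 0 < ℓ ∧
    (∀ s ≤ s₁, 0 < m1 H s) ∧ (∀ s, s₀ ≤ s → m2 H s < -ℓ)

def alphaC (k₁ k₂ : ℝ) : ℝ := (k₁ + 2 * k₂) / (k₁ + k₂)

def sigmaC {n : ℕ} (H : EucSp n → Mat n → ℝ) (k₁ k₂ : ℝ) : ℝ :=
  1 / (alphaC k₁ k₂ * m1 H (k₁ / (k₁ + k₂)) ^ (1 / (k₁ + k₂)))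

/-- Condition (i*). -/
def CondIStar {n : ℕ} (H : EucSp n → Mat n → ℝ) : Prop :=
  ∃ s : ℝ, 1 < s ∧ s < 2 ∧ m2 H s < 0

/-- Condition (ii*). -/
def CondIIStar {n : ℕ} (H : EucSp n → Mat n → ℝ) : Prop :=
  ∃ s : ℝ, 2 ≤ s ∧ ∀ t, s < t → m2 H t < 0

/-- Uniform outer ball condition with radius `ρ`. -/
def UnifOuterBall {n : ℕ} (Ω : Set (EucSp n)) (ρ : ℝ) : Prop :=
  ∀ y ∈ frontier Ω, ∃ z : EucSp n, Metric.ball z ρ ⊆ Ωᶜ ∧ y ∈ Metric.sphere z ρ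

/-- Standing assumption (*). -/
def Standing {n : ℕ} (H : EucSp n → Mat n → ℝ) (Ω : Set (EucSp n)) : Prop :=
  CondIStar H ∨ (CondIIStar H ∧ ∃ ρ > 0, UnifOuterBall Ω ρ)

/-- `spow t k = |t|^(k-1) t`. -/
def spow (t k : ℝ) : ℝ := |t| ^ (k - 1) * t

/-- The set of `λ > 0` such that `H(Du,D²u) + λ a(x)|u|^{k-1}u = 0` in `Ω`, `u = δ` on `∂Ω`,
has a positive solution. -/
def eigenSet {n : ℕ} (H : EucSp n → Mat n → ℝ) (Ω : Set (EucSp n)) (a : EucSp n → ℝ)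
    (k δ : ℝ) : Set ℝ :=
  {l : ℝ | 0 < l ∧ ∃ u : EucSp n → ℝ,
    SolvesBVP H (fun x t => l * a x * spow t k) Ω u (fun _ => δ) ∧
    ∀ x ∈ closure Ω, 0 < u x}

def lamOmega {n : ℕ} (H : EucSp n → Mat n → ℝ) (Ω : Set (EucSp n)) (a : EucSp n → ℝ)
    (k δ : ℝ) : ℝ :=
  sSup (eigenSet H Ω a k δ)

def toVec {n : ℕ} (p : EucSp n) : Fin n → ℝ := p
def ofVec {n : ℕ} (v : Fin n → ℝ) : EucSp n := WithLp.toLp 2 v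

/-- Condition D (invariance under rotations and reflections). -/
def CondD {n : ℕ} (H : EucSp n → Mat n → ℝ) : Prop :=
  ∀ Q : Mat n, Qᵀ * Q = 1 →
    ∀ (p : EucSp n) (X : Mat n), H (ofVec (Q.mulVec (toVec p))) (Q * X * Qᵀ) = H p X

/-!
Comparison with cones. For `c > 0` and a centre `z`, the function `ψ x = -c ‖x - z‖ ^ α` is smooth
away from `z`, and by the homogeneity of `H` (the exponent `α` is exactly the one for which the
powers of `‖y - z‖` cancel) `H (Dψ y) (D²ψ y) = (c α) ^ k H(e, (k₁/k) e ⊗ e - I) ≤ -(c α) ^ k m₁`.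
Once `(c α) ^ k m₁ > sup f⁺`, a sub-solution `u` cannot have `u + c ‖· - z‖ ^ α` maximal at an
interior point other than `z`. Two centres at distance `ε` cannot both carry the maximum, so for
one of them it is attained on `∂Ω`, which gives `u ≤ sup h + c (R₀ + ε) ^ α`; letting
`c ↓ σ (sup f⁺) ^ (1/k)` and `ε ↓ 0` proves (i). Part (ii) is part (i) for `-u` and
`H⁻ p X = -H (-p) (-X)`, which satisfies the same conditions.
-/

section RadialCalculus

variable {E : Type*} [NormedAddCommGroup E] [InnerProductSpace ℝ E] {y z : E}

theorem hasFDerivAt_norm_sub_rpow (hyz : y ≠ z) (a : ℝ) :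
    HasFDerivAt (fun x => ‖x - z‖ ^ a) ((a * ‖y - z‖ ^ (a - 2)) • innerSL ℝ (y - z)) y := by
  have hsq (v : E) (b : ℝ) : (‖v‖ ^ 2) ^ (b / 2) = ‖v‖ ^ b := by
    rw [← Real.rpow_natCast, ← Real.rpow_mul (norm_nonneg v)]
    ring_nf
  have h := (((hasFDerivAt_id y).sub_const z).norm_sq).rpow_const (p := a / 2)
    (Or.inl (by simpa [sub_eq_zero] using hyz))
  convert h using 1
  · simp only [id, hsq]
  · rw [← hsq (y - z) (a - 2)]
    ext v
    simp only [FunLike.coe_smul, ContinuousLinearMap.comp_apply, id,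
      ContinuousLinearMap.id_apply, Pi.smul_apply, smul_eq_mul]
    ring_nf

theorem contDiffAt_norm_sub_rpow (hyz : y ≠ z) (a : ℝ) {k : WithTop ℕ∞} :
    ContDiffAt ℝ k (fun x => ‖x - z‖ ^ a) y :=
  ((contDiffAt_id.sub contDiffAt_const).norm ℝ (sub_ne_zero.2 hyz)).rpow_const_of_ne
    (norm_ne_zero_iff.2 (sub_ne_zero.2 hyz))

theorem hasGradientAt_mul_norm_sub_rpow [CompleteSpace E] (hyz : y ≠ z) (c a : ℝ) :
    HasGradientAt (fun x => c * ‖x - z‖ ^ a) ((c * a * ‖y - z‖ ^ (a - 2)) • (y - z)) y := by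
  rw [hasGradientAt_iff_hasFDerivAt]
  refine ((hasFDerivAt_norm_sub_rpow hyz a).const_mul c).congr_fderiv ?_
  ext v
  simp [mul_assoc]

theorem fderiv_fderiv_mul_norm_sub_rpow_apply (hyz : y ≠ z) (c a : ℝ) (v w : E) :
    fderiv ℝ (fderiv ℝ (fun x => c * ‖x - z‖ ^ a)) y v w =
      c * a * ‖y - z‖ ^ (a - 2) * inner ℝ v w
        + c * a * (a - 2) * ‖y - z‖ ^ (a - 4) * (inner ℝ (y - z) v * inner ℝ (y - z) w) := by
  have hfd : fderiv ℝ (fun x => c * ‖x - z‖ ^ a)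
      =ᶠ[nhds y] fun x => (c * a * ‖x - z‖ ^ (a - 2)) • innerSL ℝ (x - z) := by
    filter_upwards [eventually_ne_nhds hyz] with x hx
    rw [((hasFDerivAt_norm_sub_rpow hx a).const_mul c).fderiv, smul_smul, mul_assoc]
  have hcoef := (hasFDerivAt_norm_sub_rpow hyz (a - 2)).const_mul (c * a)
  have hlin : HasFDerivAt (fun x : E => innerSL ℝ (x - z)) (innerSL ℝ) y :=
    (innerSL ℝ).hasFDerivAt.comp y ((hasFDerivAt_id y).sub_const z)
  rw [hfd.fderiv_eq, (hcoef.fun_smul hlin).fderiv]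
  simp only [_root_.add_apply, ContinuousLinearMap.smulRight_apply, _root_.smul_apply, smul_eq_mul,
    innerSL_apply_apply]
  rw [show a - 2 - 2 = a - 4 by ring]
  exact congrArg₂ (· + ·) rfl (by ring)

end RadialCalculus

theorem outer_smul {n : ℕ} (t : ℝ) (e : EucSp n) : outer (t • e) = t ^ 2 • outer e := by
  ext i j
  simp only [outer, PiLp.smul_apply, smul_eq_mul, Matrix.smul_apply]
  ring

theorem outer_neg {n : ℕ} (e : EucSp n) : outer (-e) = outer e := by
  simpa using outer_smul (-1) e

theorem gradient_mul_norm_sub_rpow {n : ℕ} {y z : EucSp n} (hyz : y ≠ z) (c a : ℝ) :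
    gradient (fun x => c * ‖x - z‖ ^ a) y = (c * a * ‖y - z‖ ^ (a - 2)) • (y - z) :=
  (hasGradientAt_mul_norm_sub_rpow hyz c a).gradient

theorem hessianAt_mul_norm_sub_rpow {n : ℕ} {y z : EucSp n} (hyz : y ≠ z) (c a : ℝ) :
    hessianAt (fun x => c * ‖x - z‖ ^ a) y =
      (c * a * ‖y - z‖ ^ (a - 2)) • 1 + (c * a * (a - 2) * ‖y - z‖ ^ (a - 4)) • outer (y - z) := by
  ext i j
  simp only [hessianAt, iteratedFDeriv_two_apply, Matrix.cons_val_zero, Matrix.cons_val_one,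
    fderiv_fderiv_mul_norm_sub_rpow_apply hyz, EuclideanSpace.inner_single_right, Matrix.add_apply,
    Matrix.smul_apply, Matrix.one_apply, outer, smul_eq_mul, PiLp.single_apply, conj_trivial,
    one_mul, @eq_comm _ j i]

section Homogeneity

variable {n : ℕ} {H : EucSp n → Mat n → ℝ} {k₁ k₂ : ℝ}

theorem CondB.apply_smul_smul (hB : CondB H k₁ k₂) (θ : ℝ) {μ : ℝ} (hμ : 0 < μ)
    (p : EucSp n) (X : Mat n) : H (θ • p) (μ • X) = |θ| ^ k₁ * μ ^ k₂ * H p X := by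
  rw [hB.2.2.1, hB.2.2.2 μ hμ, mul_assoc]

theorem CondB.add_pos (hB : CondB H k₁ k₂) : 0 < k₁ + k₂ := by
  linarith [hB.1, hB.2.1]

theorem CondB.alphaC_pos (hB : CondB H k₁ k₂) : 0 < alphaC k₁ k₂ := by
  have := hB.1; have := hB.2.1
  unfold alphaC; positivity

theorem two_sub_alphaC (hk : k₁ + k₂ ≠ 0) : 2 - alphaC k₁ k₂ = k₁ / (k₁ + k₂) := by
  unfold alphaC; field_simp; ring

theorem alphaC_sub_one_mul_add (hk : k₁ + k₂ ≠ 0) :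
    (alphaC k₁ k₂ - 1) * k₁ + (alphaC k₁ k₂ - 2) * k₂ = 0 := by
  unfold alphaC; field_simp; ring

theorem CondB.apply_gradient_hessianAt_cone (hB : CondB H k₁ k₂) {c : ℝ} (hc : 0 < c)
    {y z : EucSp n} (hyz : y ≠ z) :
    H (gradient (fun x => -c * ‖x - z‖ ^ alphaC k₁ k₂) y)
        (hessianAt (fun x => -c * ‖x - z‖ ^ alphaC k₁ k₂) y) =
      (c * alphaC k₁ k₂) ^ (k₁ + k₂) *
        H (‖y - z‖⁻¹ • (y - z)) ((k₁ / (k₁ + k₂)) • outer (‖y - z‖⁻¹ • (y - z)) - 1) := by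
  set a := alphaC k₁ k₂
  set r := ‖y - z‖
  set e := r⁻¹ • (y - z)
  have hk := hB.add_pos
  have hr : 0 < r := norm_pos_iff.2 (sub_ne_zero.2 hyz)
  have hca : 0 < c * a := mul_pos hc hB.alphaC_pos
  have hyze : y - z = r • e := (smul_inv_smul₀ hr.ne' _).symm
  have hgrad : gradient (fun x => -c * ‖x - z‖ ^ a) y = (-(c * a * r ^ (a - 1))) • e := by
    rw [gradient_mul_norm_sub_rpow hyz]
    change (-c * a * r ^ (a - 2)) • (y - z) = _
    rw [hyze, smul_smul, Real.rpow_sub_one hr.ne', Real.rpow_sub hr, Real.rpow_two]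
    congr 1
    field_simp
  have hhess : hessianAt (fun x => -c * ‖x - z‖ ^ a) y
      = (c * a * r ^ (a - 2)) • ((k₁ / (k₁ + k₂)) • outer e - 1) := by
    have hr4 : r ^ (a - 4) * r ^ 2 = r ^ (a - 2) := by
      rw [← Real.rpow_natCast, ← Real.rpow_add hr]; ring_nf
    rw [hessianAt_mul_norm_sub_rpow hyz]
    change (-c * a * r ^ (a - 2)) • 1 + (-c * a * (a - 2) * r ^ (a - 4)) • outer (y - z) = _
    rw [hyze, outer_smul, smul_smul, ← two_sub_alphaC hk.ne', mul_assoc _ (r ^ (a - 4)), hr4]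
    module
  rw [hgrad, hhess, hB.apply_smul_smul _ (by positivity), abs_neg,
    abs_of_pos (by positivity), Real.mul_rpow hca.le (by positivity),
    Real.mul_rpow hca.le (by positivity), ← Real.rpow_mul hr.le, ← Real.rpow_mul hr.le]
  congr 1
  calc (c * a) ^ k₁ * r ^ ((a - 1) * k₁) * ((c * a) ^ k₂ * r ^ ((a - 2) * k₂))
      = (c * a) ^ (k₁ + k₂) * r ^ ((a - 1) * k₁ + (a - 2) * k₂) := by
        rw [Real.rpow_add hca, Real.rpow_add hr]; ring
    _ = (c * a) ^ (k₁ + k₂) := by rw [alphaC_sub_one_mul_add hk.ne', Real.rpow_zero, mul_one]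

end Homogeneity

section Coercivity

variable {n : ℕ} {H : EucSp n → Mat n → ℝ} {s : ℝ} {e : EucSp n}

/- In `m1` the extrema over the unit sphere are `sInf`/`sSup`, which are `0` on unbounded sets;
positivity of `m1` therefore already forces the boundedness needed below. -/
theorem m1_le_apply_one_sub (hm : 0 < m1 H s) (he : ‖e‖ = 1) :
    m1 H s ≤ H e (1 - s • outer e) := by
  have hmS : m1 H s ≤ sInf {r | ∃ e : EucSp n, ‖e‖ = 1 ∧ r = H e (1 - s • outer e)} :=
    min_le_left _ _
  have hbdd : BddBelow {r | ∃ e : EucSp n, ‖e‖ = 1 ∧ r = H e (1 - s • outer e)} := by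
    by_contra hb
    rw [Real.sInf_of_not_bddBelow hb] at hmS
    exact hm.not_ge hmS
  exact hmS.trans (csInf_le hbdd ⟨e, he, rfl⟩)

theorem apply_smul_outer_sub_one_le (hm : 0 < m1 H s) (he : ‖e‖ = 1) :
    H e (s • outer e - 1) ≤ -m1 H s := by
  have hmS : m1 H s ≤ -sSup {r | ∃ e : EucSp n, ‖e‖ = 1 ∧ r = H e (s • outer e - 1)} :=
    min_le_right _ _
  have hbdd : BddAbove {r | ∃ e : EucSp n, ‖e‖ = 1 ∧ r = H e (s • outer e - 1)} := by
    by_contra hb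
    rw [Real.sSup_of_not_bddAbove hb, neg_zero] at hmS
    exact hm.not_ge hmS
  exact le_neg_of_le_neg (hmS.trans (neg_le_neg (le_csSup hbdd ⟨e, he, rfl⟩)))

end Coercivity

section Duality

variable {n : ℕ} {H : EucSp n → Mat n → ℝ} {k₁ k₂ : ℝ}

def negConj (H : EucSp n → Mat n → ℝ) : EucSp n → Mat n → ℝ := fun p X => -H (-p) (-X)

theorem CondB.negConj (hB : CondB H k₁ k₂) : CondB (negConj H) k₁ k₂ :=
  ⟨hB.1, hB.2.1, fun θ p X => by simp only [_root_.negConj, ← smul_neg, hB.2.2.1, mul_neg],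
    fun θ hθ p X => by simp only [_root_.negConj, ← smul_neg, hB.2.2.2 θ hθ, mul_neg]⟩

theorem negConj_apply_smul_outer_sub_one_le {s : ℝ} (hm : 0 < m1 H s) {e : EucSp n}
    (he : ‖e‖ = 1) : negConj H e (s • outer e - 1) ≤ -m1 H s := by
  have h := m1_le_apply_one_sub hm (e := -e) (by rwa [norm_neg])
  rw [outer_neg] at h
  simpa only [negConj, neg_sub, neg_le_neg_iff] using h

theorem gradient_neg (ψ : EucSp n → ℝ) (y : EucSp n) :
    gradient (-ψ) y = -gradient ψ y := by
  simp only [gradient, fderiv_neg, map_neg]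

theorem hessianAt_neg (ψ : EucSp n → ℝ) (y : EucSp n) :
    hessianAt (-ψ) y = -hessianAt ψ y := by
  ext i j
  simp only [hessianAt, iteratedFDeriv_neg_apply, _root_.neg_apply, Matrix.neg_apply]

theorem ViscSuperSoln.neg {f : EucSp n → ℝ} {Ω : Set (EucSp n)} {u : EucSp n → ℝ}
    (hu : ViscSuperSoln H (fun x _ => f x) Ω u) :
    ViscSubSoln (negConj H) (fun x _ => -f x) Ω (-u) := by
  intro ψ y hy hψ hmax
  have hmin : IsLocalMin (fun x => u x - (-ψ) x) y := by
    simpa only [Pi.neg_apply, neg_sub', neg_neg] using hmax.neg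
  have h := hu (-ψ) y hy hψ.neg hmin
  rw [gradient_neg, hessianAt_neg] at h
  simp only [negConj]
  linarith

end Duality

theorem one_div_mul_rpow_mul_rpow_mul_eq {α m G k : ℝ} (hα : 0 < α) (hm : 0 < m) (hG : 0 ≤ G)
    (hk : 0 < k) : (1 / (α * m ^ (1 / k)) * G ^ (1 / k) * α) ^ k * m = G := by
  have : 1 / (α * m ^ (1 / k)) * G ^ (1 / k) * α = (G / m) ^ (1 / k) := by
    rw [Real.div_rpow hG hm.le]
    field_simp
  rw [this, ← Real.rpow_mul (by positivity), one_div_mul_cancel hk.ne', Real.rpow_one,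
    div_mul_cancel₀ _ hm.ne']

section Comparison

variable {n : ℕ} {Ω : Set (EucSp n)} {H : EucSp n → Mat n → ℝ} {k₁ k₂ : ℝ}
  {f u : EucSp n → ℝ} {m F c M : ℝ}

theorem ViscSubSoln.eq_of_isLocalMax_add_rpow (hsub : ViscSubSoln H (fun x _ => f x) Ω u)
    (hB : CondB H k₁ k₂)
    (hHm : ∀ e : EucSp n, ‖e‖ = 1 → H e ((k₁ / (k₁ + k₂)) • outer e - 1) ≤ -m)
    (hfF : ∀ x ∈ Ω, f x ≤ F) (hc : 0 < c) (hcF : F < (c * alphaC k₁ k₂) ^ (k₁ + k₂) * m)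
    {y z : EucSp n} (hy : y ∈ Ω)
    (hmax : IsLocalMax (fun x => u x + c * ‖x - z‖ ^ alphaC k₁ k₂) y) : y = z := by
  by_contra hyz
  have hloc : IsLocalMax (fun x => u x - -c * ‖x - z‖ ^ alphaC k₁ k₂) y := by
    simpa only [neg_mul, sub_neg_eq_add] using hmax
  have hvisc := hsub _ y hy (contDiffAt_const.mul (contDiffAt_norm_sub_rpow hyz _)) hloc
  rw [hB.apply_gradient_hessianAt_cone hc hyz] at hvisc
  have he : ‖‖y - z‖⁻¹ • (y - z)‖ = 1 := by
    simpa using norm_smul_inv_norm (𝕜 := ℝ) (sub_ne_zero.2 hyz)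
  have hH := mul_le_mul_of_nonneg_left (hHm _ he)
    (Real.rpow_nonneg (mul_pos hc hB.alphaC_pos).le (k₁ + k₂))
  linarith [hfF y hy, hvisc]

theorem ViscSubSoln.exists_isMaxOn_add_rpow (hsub : ViscSubSoln H (fun x _ => f x) Ω u)
    (husc : UpperSemicontinuousOn u (closure Ω)) (hΩ : IsOpen Ω)
    (hK : IsCompact (closure Ω)) (hne : Ω.Nonempty) (hB : CondB H k₁ k₂)
    (hHm : ∀ e : EucSp n, ‖e‖ = 1 → H e ((k₁ / (k₁ + k₂)) • outer e - 1) ≤ -m)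
    (hfF : ∀ x ∈ Ω, f x ≤ F) (hc : 0 < c) (hcF : F < (c * alphaC k₁ k₂) ^ (k₁ + k₂) * m)
    (z : EucSp n) :
    ∃ y ∈ closure Ω, IsMaxOn (fun x => u x + c * ‖x - z‖ ^ alphaC k₁ k₂) (closure Ω) y ∧
      (y ∈ frontier Ω ∨ y = z) := by
  have hcont : Continuous fun x : EucSp n => c * ‖x - z‖ ^ alphaC k₁ k₂ := by
    have := hB.alphaC_pos
    fun_prop (disch := positivity)
  obtain ⟨y, hyK, hmax⟩ :=
    (husc.add hcont.continuousOn.upperSemicontinuousOn).exists_isMaxOn hne.closure hK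
  refine ⟨y, hyK, hmax, ?_⟩
  by_cases hfr : y ∈ frontier Ω
  · exact Or.inl hfr
  have hy : y ∈ Ω := by
    by_contra hy
    exact hfr (hΩ.frontier_eq ▸ ⟨hyK, hy⟩)
  exact Or.inr (hsub.eq_of_isLocalMax_add_rpow hB hHm hfF hc hcF hy
    ((hmax.on_subset subset_closure).isLocalMax (hΩ.mem_nhds hy)))

theorem ViscSubSoln.le_add_mul_rpow_of_lt [NeZero n] (hsub : ViscSubSoln H (fun x _ => f x) Ω u)
    (husc : UpperSemicontinuousOn u (closure Ω)) (hΩ : IsOpen Ω) {z₀ : EucSp n} {R₀ : ℝ}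
    (hΩR : Ω ⊆ Metric.ball z₀ R₀) (hB : CondB H k₁ k₂)
    (hHm : ∀ e : EucSp n, ‖e‖ = 1 → H e ((k₁ / (k₁ + k₂)) • outer e - 1) ≤ -m)
    (hfF : ∀ x ∈ Ω, f x ≤ F) (huM : ∀ x ∈ frontier Ω, u x ≤ M) (hc : 0 < c)
    (hcF : F < (c * alphaC k₁ k₂) ^ (k₁ + k₂) * m) {ε : ℝ} (hε : 0 < ε) {x : EucSp n}
    (hx : x ∈ Ω) : u x ≤ M + c * (R₀ + ε) ^ alphaC k₁ k₂ := by
  have hα := hB.alphaC_pos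
  obtain ⟨v, hv⟩ := exists_norm_eq (EucSp n) hε.le
  have hK : IsCompact (closure Ω) := (Metric.isBounded_ball.subset hΩR).isCompact_closure
  have hR : ∀ w ∈ closure Ω, ‖w - z₀‖ ≤ R₀ := fun w hw => by
    simpa [dist_eq_norm] using
      Metric.closure_ball_subset_closedBall (closure_mono hΩR hw)
  have hfrontier : ∀ z, ‖z - z₀‖ ≤ ε → ∀ y ∈ frontier Ω,
      IsMaxOn (fun x => u x + c * ‖x - z‖ ^ alphaC k₁ k₂) (closure Ω) y →
      u x ≤ M + c * (R₀ + ε) ^ alphaC k₁ k₂ := by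
    intro z hz y hy hmax
    have hyz : ‖y - z‖ ≤ R₀ + ε := calc
      ‖y - z‖ ≤ ‖y - z₀‖ + ‖z - z₀‖ := norm_sub_le_norm_sub_add_norm_sub y z₀ z |>.trans_eq
          (by rw [norm_sub_rev z₀ z])
      _ ≤ R₀ + ε := add_le_add (hR y (frontier_subset_closure hy)) hz
    have hxy := hmax (subset_closure hx)
    have : c * ‖y - z‖ ^ alphaC k₁ k₂ ≤ c * (R₀ + ε) ^ alphaC k₁ k₂ := by gcongr
    have : 0 ≤ c * ‖x - z‖ ^ alphaC k₁ k₂ := by positivity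
    linarith [huM y hy, hxy.out]
  have hmax := hsub.exists_isMaxOn_add_rpow husc hΩ hK ⟨x, hx⟩ hB hHm hfF hc hcF
  obtain ⟨y₀, hy₀, hmax₀, hfr₀ | rfl⟩ := hmax z₀
  · exact hfrontier z₀ (by simpa using hε.le) y₀ hfr₀ hmax₀
  obtain ⟨y₁, hy₁, hmax₁, hfr₁ | rfl⟩ := hmax (y₀ + v)
  · exact hfrontier (y₀ + v) (by simp [hv]) y₁ hfr₁ hmax₁
  have h₀ := (hmax₀ hy₁).out
  have h₁ := (hmax₁ hy₀).out
  simp only [add_sub_cancel_left, sub_add_cancel_left, sub_self, norm_neg, norm_zero, hv,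
    Real.zero_rpow hα.ne', mul_zero, add_zero] at h₀ h₁
  have : 0 < c * ε ^ alphaC k₁ k₂ := by positivity
  linarith

theorem ViscSubSoln.le_add_mul_rpow [NeZero n] (hsub : ViscSubSoln H (fun x _ => f x) Ω u)
    (husc : UpperSemicontinuousOn u (closure Ω)) (hΩ : IsOpen Ω) {z₀ : EucSp n} {R₀ : ℝ}
    (hΩR : Ω ⊆ Metric.ball z₀ R₀) (hB : CondB H k₁ k₂) (hm : 0 < m)
    (hHm : ∀ e : EucSp n, ‖e‖ = 1 → H e ((k₁ / (k₁ + k₂)) • outer e - 1) ≤ -m)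
    (hF : 0 ≤ F) (hfF : ∀ x ∈ Ω, f x ≤ F) (huM : ∀ x ∈ frontier Ω, u x ≤ M) {x : EucSp n}
    (hx : x ∈ Ω) :
    u x ≤ M + 1 / (alphaC k₁ k₂ * m ^ (1 / (k₁ + k₂))) * F ^ (1 / (k₁ + k₂)) *
      R₀ ^ alphaC k₁ k₂ := by
  have hk := hB.add_pos
  have hα := hB.alphaC_pos
  set σ := 1 / (alphaC k₁ k₂ * m ^ (1 / (k₁ + k₂)))
  have hbound : ∀ ε > 0,
      u x ≤ M + σ * (F + ε) ^ (1 / (k₁ + k₂)) * (R₀ + ε) ^ alphaC k₁ k₂ := fun ε hε =>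
    hsub.le_add_mul_rpow_of_lt husc hΩ hΩR hB hHm hfF huM (by positivity)
      (by rw [one_div_mul_rpow_mul_rpow_mul_eq hα hm (by positivity) hk]; linarith) hε hx
  have hcont : ContinuousAt
      (fun ε => M + σ * (F + ε) ^ (1 / (k₁ + k₂)) * (R₀ + ε) ^ alphaC k₁ k₂) 0 :=
    continuousAt_const.add ((continuousAt_const.mul
      ((continuousAt_const.add continuousAt_id).rpow_const (Or.inr (by positivity)))).mul
      ((continuousAt_const.add continuousAt_id).rpow_const (Or.inr hα.le)))
  simpa using ge_of_tendsto (hcont.tendsto.mono_left (nhdsWithin_le_nhds (s := Set.Ioi 0)))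
    (eventually_nhdsWithin_of_forall hbound)

end Comparison

theorem BddAbove.image_max_zero {α : Type*} {s : Set α} {f : α → ℝ} (hf : BddAbove (f '' s)) :
    BddAbove ((fun y => max (f y) 0) '' s) := by
  obtain ⟨b, hb⟩ := hf
  exact ⟨max b 0, by rintro _ ⟨y, hy, rfl⟩; exact max_le_max (hb ⟨y, hy, rfl⟩) le_rfl⟩

theorem BddBelow.image_min_zero {α : Type*} {s : Set α} {f : α → ℝ} (hf : BddBelow (f '' s)) :
    BddBelow ((fun y => min (f y) 0) '' s) := by
  obtain ⟨b, hb⟩ := hf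
  exact ⟨min b 0, by rintro _ ⟨y, hy, rfl⟩; exact min_le_min (hb ⟨y, hy, rfl⟩) le_rfl⟩

theorem stmt_8_general {n : ℕ} (hn : 2 ≤ n) (Ω : Set (EucSp n)) (hΩ : IsBoundedDomain Ω)
    (H : EucSp n → Mat n → ℝ)
    (k₁ k₂ : ℝ) (hB : CondB H k₁ k₂) (hC : CondC H k₁ k₂)
    (f : EucSp n → ℝ) (hfb : ∃ M : ℝ, ∀ x ∈ Ω, |f x| ≤ M)
    (h : EucSp n → ℝ) (hhc : ContinuousOn h (frontier Ω))
    (z₀ : EucSp n) (R₀ : ℝ) (hΩR : Ω ⊆ Metric.ball z₀ R₀) :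
    (∀ u : EucSp n → ℝ, UpperSemicontinuousOn u (closure Ω) →
      ViscSubSoln H (fun x _ => f x) Ω u → (∀ x ∈ frontier Ω, u x ≤ h x) →
      ∀ x ∈ Ω, u x ≤ sSup (h '' frontier Ω) +
        sigmaC H k₁ k₂ * sSup ((fun x => max (f x) 0) '' Ω) ^ (1 / (k₁ + k₂)) *
          R₀ ^ alphaC k₁ k₂) ∧
    (∀ u : EucSp n → ℝ, LowerSemicontinuousOn u (closure Ω) →
      ViscSuperSoln H (fun x _ => f x) Ω u → (∀ x ∈ frontier Ω, h x ≤ u x) →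
      ∀ x ∈ Ω, sInf (h '' frontier Ω) -
        sigmaC H k₁ k₂ * |sInf ((fun x => min (f x) 0) '' Ω)| ^ (1 / (k₁ + k₂)) *
          R₀ ^ alphaC k₁ k₂ ≤ u x) := by
  have : NeZero n := ⟨by omega⟩
  obtain ⟨B, hfB⟩ := hfb
  have hf_above : BddAbove (f '' Ω) :=
    ⟨B, by rintro _ ⟨x, hx, rfl⟩; exact (abs_le.1 (hfB x hx)).2⟩
  have hf_below : BddBelow (f '' Ω) :=
    ⟨-B, by rintro _ ⟨x, hx, rfl⟩; exact (abs_le.1 (hfB x hx)).1⟩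
  have hh : IsCompact (h '' frontier Ω) :=
    (Metric.isCompact_of_isClosed_isBounded isClosed_frontier
      (hΩ.2.2.closure.subset frontier_subset_closure)).image_of_continuousOn hhc
  constructor
  · intro u husc hsub hbc x hx
    exact hsub.le_add_mul_rpow husc hΩ.1 hΩR hB hC.1 (fun _ => apply_smul_outer_sub_one_le hC.1)
      ((le_max_right _ _).trans (le_csSup hf_above.image_max_zero ⟨x, hx, rfl⟩))
      (fun y hy => (le_max_left _ _).trans (le_csSup hf_above.image_max_zero ⟨y, hy, rfl⟩))
      (fun y hy => (hbc y hy).trans (le_csSup hh.bddAbove ⟨y, hy, rfl⟩)) hx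
  · intro u hlsc hsup hbc x hx
    have := hsup.neg.le_add_mul_rpow hlsc.neg hΩ.1 hΩR hB.negConj hC.1
      (fun _ => negConj_apply_smul_outer_sub_one_le hC.1) (abs_nonneg _)
      (fun y hy => (neg_le_neg ((csInf_le hf_below.image_min_zero ⟨y, hy, rfl⟩).trans
        (min_le_left _ _))).trans (neg_le_abs _))
      (fun y hy => neg_le_neg ((csInf_le hh.bddBelow ⟨y, hy, rfl⟩).trans (hbc y hy))) hx
    simp only [Pi.neg_apply] at this
    unfold sigmaC
    linarith

/-- A priori bounds for inhomogeneous equations (Lemma 6.3). -/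
theorem stmt_8 {n : ℕ} (hn : 2 ≤ n) (Ω : Set (EucSp n)) (hΩ : IsBoundedDomain Ω)
    (H : EucSp n → Mat n → ℝ) (hH : Continuous fun q : EucSp n × Mat n => H q.1 q.2)
    (k₁ k₂ : ℝ) (hA : CondA H) (hB : CondB H k₁ k₂) (hC : CondC H k₁ k₂)
    (f : EucSp n → ℝ) (hfc : ContinuousOn f Ω) (hfb : ∃ M : ℝ, ∀ x ∈ Ω, |f x| ≤ M)
    (h : EucSp n → ℝ) (hhc : ContinuousOn h (frontier Ω))
    (z₀ : EucSp n) (R₀ : ℝ) (hR₀ : 0 < R₀) (hΩR : Ω ⊆ Metric.ball z₀ R₀) :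
    (∀ u : EucSp n → ℝ, UpperSemicontinuousOn u (closure Ω) →
      ViscSubSoln H (fun x _ => f x) Ω u → (∀ x ∈ frontier Ω, u x ≤ h x) →
      ∀ x ∈ Ω, u x ≤ sSup (h '' frontier Ω) +
        sigmaC H k₁ k₂ * sSup ((fun x => max (f x) 0) '' Ω) ^ (1 / (k₁ + k₂)) *
          R₀ ^ alphaC k₁ k₂) ∧
    (∀ u : EucSp n → ℝ, LowerSemicontinuousOn u (closure Ω) →
      ViscSuperSoln H (fun x _ => f x) Ω u → (∀ x ∈ frontier Ω, h x ≤ u x) →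
      ∀ x ∈ Ω, sInf (h '' frontier Ω) -
        sigmaC H k₁ k₂ * |sInf ((fun x => min (f x) 0) '' Ω)| ^ (1 / (k₁ + k₂)) *
          R₀ ^ alphaC k₁ k₂ ≤ u x) :=
  stmt_8_general hn Ω hΩ H k₁ k₂ hB hC f hfb h hhc z₀ R₀ hΩR

end
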